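/- arXiv:1509.01314 — 4 statements merged into one kernel-verified Lean document; each statement's English description precedes it below -/
import Mathlib

section
/- Let v > 0, s > 0, c > 0, and u(b) = (v - b)·f(b)/(f(b) + s) with f(b) = e^{cb} - 1. At any b ∈ (0, v) with u'(b) = 0, one has u''(b) < 0; i.e., every interior critical point of u is a strict local maximum. -/
/-!
Write `u = N / D` with `N b = (v - b) f b` and `D b = f b + s`. At a critical point
`N' D = N D'`, so the term of `u''` carrying `u'` vanishes and `u'' = (N'' D - N D'') / D²`.
Using the critical-point relation `(v - b) f' s = f (f + s)` this numerator becomes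
`(f + s) (f f'' - 2 f'²) / f'`, which is negative as soon as `f f'' < 2 f'²`; for
`f b = e^{cb} - 1` one has `f f'' - 2 f'² = -c² e^{cb} (e^{cb} + 1)`.
-/

open Filter Topology Real

theorem mul_sub_mul_eq_zero_of_deriv_div_eq_zero {N D : ℝ → ℝ} {n' d' b : ℝ}
    (hN : HasDerivAt N n' b) (hD : HasDerivAt D d' b) (hDb : D b ≠ 0)
    (hcrit : deriv (fun x => N x / D x) b = 0) :
    n' * D b - N b * d' = 0 := by
  rw [(hN.fun_div hD hDb).deriv, div_eq_zero_iff] at hcrit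
  exact hcrit.resolve_right (pow_ne_zero 2 hDb)

theorem hasDerivAt_deriv_div_of_deriv_eq_zero {N D N' D' : ℝ → ℝ} {n'' d'' b : ℝ}
    (hN : ∀ᶠ x in 𝓝 b, HasDerivAt N (N' x) x)
    (hD : ∀ᶠ x in 𝓝 b, HasDerivAt D (D' x) x)
    (hN' : HasDerivAt N' n'' b) (hD' : HasDerivAt D' d'' b) (hDb : D b ≠ 0)
    (hcrit : deriv (fun x => N x / D x) b = 0) :
    HasDerivAt (deriv fun x => N x / D x) ((n'' * D b - N b * d'') / D b ^ 2) b := by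
  have hDne : ∀ᶠ x in 𝓝 b, D x ≠ 0 := hD.self_of_nhds.continuousAt.eventually_ne hDb
  have hderiv : deriv (fun x => N x / D x) =ᶠ[𝓝 b]
      fun x => (N' x * D x - N x * D' x) / D x ^ 2 :=
    (hN.and (hD.and hDne)).mono fun x ⟨hNx, hDx, hx⟩ => (hNx.fun_div hDx hx).deriv
  have hcross :=
    mul_sub_mul_eq_zero_of_deriv_div_eq_zero hN.self_of_nhds hD.self_of_nhds hDb hcrit
  have hnum : HasDerivAt (fun x => N' x * D x - N x * D' x) (n'' * D b - N b * d'') b :=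
    ((hN'.mul hD.self_of_nhds).sub (hN.self_of_nhds.mul hD')).congr_deriv (by ring)
  refine HasDerivAt.congr_of_eventuallyEq ?_ hderiv
  refine (hnum.fun_div (hD.self_of_nhds.fun_pow 2) (pow_ne_zero 2 hDb)).congr_deriv ?_
  rw [hcross]
  field_simp
  ring

noncomputable def winnersPayUtility (v s : ℝ) (f : ℝ → ℝ) (x : ℝ) : ℝ :=
  (v - x) * f x / (f x + s)

theorem deriv_deriv_winnersPayUtility_neg {f f' : ℝ → ℝ} {f'' v s b : ℝ}
    (hf : ∀ᶠ x in 𝓝 b, HasDerivAt f (f' x) x) (hf' : HasDerivAt f' f'' b)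
    (hpos : 0 < f b + s) (hf'pos : 0 < f' b) (hgrowth : f b * f'' < 2 * f' b ^ 2)
    (hcrit : deriv (winnersPayUtility v s f) b = 0) :
    deriv (deriv (winnersPayUtility v s f)) b < 0 := by
  have hN : ∀ᶠ x in 𝓝 b, HasDerivAt (fun y => (v - y) * f y) (-f x + (v - x) * f' x) x :=
    hf.mono fun x hx => (((hasDerivAt_id' x).const_sub v).mul hx).congr_deriv (by ring)
  have hN' : HasDerivAt (fun x => -f x + (v - x) * f' x) (-2 * f' b + (v - b) * f'') b :=
    (hf.self_of_nhds.neg.add (((hasDerivAt_id' b).const_sub v).mul hf')).congr_deriv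
      (by ring)
  have hD : ∀ᶠ x in 𝓝 b, HasDerivAt (fun y => f y + s) (f' x) x :=
    hf.mono fun x hx => hx.add_const s
  have hcross : (v - b) * f' b * s = f b * (f b + s) := by
    linear_combination mul_sub_mul_eq_zero_of_deriv_div_eq_zero hN.self_of_nhds
      hD.self_of_nhds hpos.ne' hcrit
  have hsecond : HasDerivAt (deriv (winnersPayUtility v s f))
      (((-2 * f' b + (v - b) * f'') * (f b + s) - (v - b) * f b * f'') / (f b + s) ^ 2) b :=
    hasDerivAt_deriv_div_of_deriv_eq_zero hN hD hN' hf' hpos.ne' hcrit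
  rw [hsecond.deriv]
  refine div_neg_of_neg_of_pos ?_ (by positivity)
  refine neg_of_mul_neg_left (b := f' b) ?_ hf'pos.le
  have hneg : (f b + s) * (f b * f'' - 2 * f' b ^ 2) < 0 :=
    mul_neg_of_pos_of_neg hpos (by linarith)
  linear_combination hneg + f'' * hcross

theorem critical_points_are_maxima_general (v s c : ℝ) (hs : 0 < s) (hc : 0 < c)
    (f : ℝ → ℝ) (hf : ∀ b, f b = Real.exp (c * b) - 1)
    (u : ℝ → ℝ) (hu : ∀ b, u b = (v - b) * f b / (f b + s))
    (b : ℝ) (hb : b ∈ Set.Ioo 0 v) (hcrit : deriv u b = 0) :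
    deriv (deriv u) b < 0 := by
  obtain rfl : u = winnersPayUtility v s f := funext hu
  obtain rfl : f = fun x => exp (c * x) - 1 := funext hf
  have hexp : ∀ x, HasDerivAt (fun y => exp (c * y)) (c * exp (c * x)) x := fun x =>
    ((hasDerivAt_id x).const_mul c).exp.congr_deriv (by simp [mul_comm])
  have hcb := mul_pos hc hb.1
  refine deriv_deriv_winnersPayUtility_neg (.of_forall fun x => (hexp x).sub_const 1)
    ((hexp b).const_mul c) ?_ (by positivity) ?_ hcrit
  · nlinarith [add_one_le_exp (c * b)]
  · nlinarith [exp_pos (c * b), mul_pos hc hc]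

theorem critical_points_are_maxima (v s c : ℝ) (hv : 0 < v) (hs : 0 < s) (hc : 0 < c)
    (f : ℝ → ℝ) (hf : ∀ b, f b = Real.exp (c * b) - 1)
    (u : ℝ → ℝ) (hu : ∀ b, u b = (v - b) * f b / (f b + s))
    (b : ℝ) (hb : b ∈ Set.Ioo 0 v) (hcrit : deriv u b = 0) :
    deriv (deriv u) b < 0 :=
  critical_points_are_maxima_general v s c hs hc f hf u hu b hb hcrit
end

section
/- Let c > 0, v > 0, s > 0, f(b) = e^{cb} - 1, a(b) = f(b)/(f(b)+s), u(b) = (v-b)·a(b). If b ∈ (0, v) satisfies u'(b) = 0, then b = v - (1/c)·(1 - e^{-cb})·(1/(1 - a(b))). -/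
/-!
With `a = f / (f + s)` one has `a' = f' s / (f + s)²` and `1 - a = s / (f + s)`, so the
first-order condition `a = (v - b) a'` of `u = (v - b) a` reads `f (f + s) = (v - b) f' s`,
i.e. `v - b = (f / f') / (1 - a)`. For `f = exp (c ·) - 1` the ratio `f / f'` is
`(1 - exp (-c b)) / c`.
-/

open Real

theorem HasDerivAt.div_add_const_self {f : ℝ → ℝ} {f' s x : ℝ} (hf : HasDerivAt f f' x)
    (hfs : f x + s ≠ 0) :
    HasDerivAt (fun y => f y / (f y + s)) (f' * s / (f x + s) ^ 2) x :=
  (hf.div (hf.add_const s) hfs).congr_deriv (by ring)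

theorem eq_sub_mul_of_deriv_sub_mul_eq_zero {g : ℝ → ℝ} {g' v b : ℝ} (hg : HasDerivAt g g' b)
    (hcrit : deriv (fun x => (v - x) * g x) b = 0) :
    g b = (v - b) * g' := by
  have hu : HasDerivAt (fun x => (v - x) * g x) (-1 * g b + (v - b) * g') b :=
    ((hasDerivAt_id b).const_sub v).mul hg
  rw [hu.deriv] at hcrit
  linarith

theorem sub_eq_of_deriv_sub_mul_div_add_const_eq_zero {f : ℝ → ℝ} {f' s v b : ℝ}
    (hf : HasDerivAt f f' b) (hf' : f' ≠ 0) (hs : s ≠ 0) (hfs : f b + s ≠ 0)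
    (hcrit : deriv (fun x => (v - x) * (f x / (f x + s))) b = 0) :
    v - b = f b / f' * (1 / (1 - f b / (f b + s))) := by
  have hfoc := eq_sub_mul_of_deriv_sub_mul_eq_zero (hf.div_add_const_self hfs) hcrit
  have hcompl : 1 - f b / (f b + s) = s / (f b + s) := by
    field_simp
    ring
  rw [hcompl]
  field_simp at hfoc ⊢
  linarith

theorem exp_mul_sub_one_div_mul_exp_mul {c : ℝ} (hc : c ≠ 0) (b : ℝ) :
    (exp (c * b) - 1) / (c * exp (c * b)) = 1 / c * (1 - exp (-(c * b))) := by
  rw [exp_neg]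
  field_simp

theorem exp_equilibrium_char_general (c v s : ℝ) (hc : 0 < c) (hs : 0 < s)
    (f : ℝ → ℝ) (hf : ∀ b, f b = Real.exp (c * b) - 1)
    (a : ℝ → ℝ) (ha : ∀ b, a b = f b / (f b + s))
    (u : ℝ → ℝ) (hu : ∀ b, u b = (v - b) * a b)
    (b : ℝ) (hb : b ∈ Set.Ioo 0 v) (hcrit : deriv u b = 0) :
    b = v - (1 / c) * (1 - Real.exp (-(c * b))) * (1 / (1 - a b)) := by
  have hu_eq : u = fun x => (v - x) * (f x / (f x + s)) := funext fun x => by rw [hu, ha]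
  have hf_deriv : HasDerivAt f (c * exp (c * b)) b := by
    rw [show f = fun x => exp (c * x) - 1 from funext hf]
    exact (((hasDerivAt_id b).const_mul c).exp.sub_const 1).congr_deriv (by simp only [id]; ring)
  have hfb_pos : 0 < f b := by
    rw [hf, sub_pos]
    exact one_lt_exp_iff.mpr (mul_pos hc hb.1)
  have key := sub_eq_of_deriv_sub_mul_div_add_const_eq_zero hf_deriv
    (mul_ne_zero hc.ne' (exp_pos _).ne') hs.ne' (by positivity) (hu_eq ▸ hcrit)
  rw [hf b, exp_mul_sub_one_div_mul_exp_mul hc.ne', ← hf b, ← ha] at key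
  linarith

theorem exp_equilibrium_char (c v s : ℝ) (hc : 0 < c) (hv : 0 < v) (hs : 0 < s)
    (f : ℝ → ℝ) (hf : ∀ b, f b = Real.exp (c * b) - 1)
    (a : ℝ → ℝ) (ha : ∀ b, a b = f b / (f b + s))
    (u : ℝ → ℝ) (hu : ∀ b, u b = (v - b) * a b)
    (b : ℝ) (hb : b ∈ Set.Ioo 0 v) (hcrit : deriv u b = 0) :
    b = v - (1 / c) * (1 - Real.exp (-(c * b))) * (1 / (1 - a b)) :=
  exp_equilibrium_char_general c v s hc hs f hf a ha u hu b hb hcrit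
end

section
/- Consider n ≥ 2 bidders with values v_1 ≥ v_2 ≥ ... ≥ v_n > 0 and weight f(x) = e^{cx} - 1, c > 0. Suppose w ∈ ℝⁿ with 0 < w_i and w_i ≤ v_i - (1/c)·(1 - e^{-c·w_i})·(1/(1 - a_i(w))) for all i, where a_i(w) = f(w_i)/Σ_j f(w_j). Then for any bid vector b with b_i ≥ w_i for all i, the best response of each bidder i to the others' bids (the unique maximizer of b ↦ (v_i - b)·f(b)/(f(b) + Σ_{j≠i} f(b_j)) on [0, v_i]) is at least w_i. -/
/-!
A bidder's utility `(v - x) f x / (f x + S)` has derivative of the sign of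
`(v - x) f' x S - f x (f x + S)`, which for `f x = exp (c x) - 1` is positive exactly when
`v - x` exceeds the shading term `(1 - exp (-c x)) / c * (1 + f x / S)`. This term increases in
`x` and decreases in `S`, and the hypothesis on `w` says it is below `v i - w i` at `x = w i`
with the smallest admissible `S` (the others bidding `w`). Hence the utility is strictly
increasing on `[0, w i]`, and no maximizer lies below `w i`.
-/

open Real Set Finset

noncomputable def utility (f : ℝ → ℝ) (v S x : ℝ) : ℝ := (v - x) * f x / (f x + S)

theorem hasDerivAt_utility {f : ℝ → ℝ} {f' v S x : ℝ} (hf : HasDerivAt f f' x)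
    (hx : f x + S ≠ 0) :
    HasDerivAt (utility f v S) (((v - x) * f' * S - f x * (f x + S)) / (f x + S) ^ 2) x :=
  ((((hasDerivAt_id x).const_sub v).mul hf).div (hf.add_const S) hx).congr_deriv <| by
    simp only [neg_mul, one_mul, id_eq, Pi.mul_apply]
    ring

theorem utility_strictMonoOn {f f' : ℝ → ℝ} {v S a b : ℝ}
    (hf : ∀ x ∈ Icc a b, HasDerivAt f (f' x) x) (hpos : ∀ x ∈ Icc a b, 0 < f x + S)
    (hmarg : ∀ x ∈ Ioo a b, f x * (f x + S) < (v - x) * f' x * S) :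
    StrictMonoOn (utility f v S) (Icc a b) := by
  refine strictMonoOn_of_deriv_pos (convex_Icc a b) (fun x hx => ?_) fun x hx => ?_
  · exact (hasDerivAt_utility (hf x hx) (hpos x hx).ne').continuousAt.continuousWithinAt
  · rw [interior_Icc] at hx
    have hx' := Ioo_subset_Icc_self hx
    rw [(hasDerivAt_utility (v := v) (hf x hx') (hpos x hx').ne').deriv]
    exact div_pos (sub_pos.2 (hmarg x hx)) (pow_pos (hpos x hx') 2)

/-- `f x / f' x * (f x + S) / S` for the weight `f x = exp (c * x) - 1`. -/
noncomputable def shading (c S x : ℝ) : ℝ :=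
  1 / c * (1 - exp (-(c * x))) * (1 + (exp (c * x) - 1) / S)

theorem shading_nonneg {c S x : ℝ} (hc : 0 < c) (hS : 0 ≤ S) (hx : 0 ≤ x) :
    0 ≤ shading c S x := by
  have hf : 0 ≤ exp (c * x) - 1 := sub_nonneg.2 (one_le_exp (by positivity))
  have hg : 0 ≤ 1 - exp (-(c * x)) :=
    sub_nonneg.2 (exp_le_one_iff.2 (neg_nonpos.2 (by positivity)))
  unfold shading
  positivity

theorem shading_le_shading {c S S' x y : ℝ} (hc : 0 < c) (hS' : 0 < S') (hS : S' ≤ S)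
    (hx : 0 ≤ x) (hxy : x ≤ y) : shading c S x ≤ shading c S' y := by
  have hfx : 0 ≤ exp (c * x) - 1 := sub_nonneg.2 (one_le_exp (by positivity))
  have hfy : 0 ≤ exp (c * y) - 1 := sub_nonneg.2 (one_le_exp (by nlinarith))
  have hgy : 0 ≤ 1 - exp (-(c * y)) :=
    sub_nonneg.2 (exp_le_one_iff.2 (neg_nonpos.2 (by nlinarith)))
  unfold shading
  apply mul_le_mul _ _ (add_nonneg zero_le_one (div_nonneg hfx (hS'.le.trans hS)))
    (mul_nonneg (by positivity) hgy)
  · gcongr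
  · gcongr

theorem exp_weight_mul_lt_of_shading_lt {c S v x : ℝ} (hc : 0 < c) (hS : 0 < S)
    (h : shading c S x < v - x) :
    (exp (c * x) - 1) * (exp (c * x) - 1 + S) < (v - x) * (c * exp (c * x)) * S := by
  have hfac : (exp (c * x) - 1) * (exp (c * x) - 1 + S)
      = shading c S x * (c * exp (c * x) * S) := by
    unfold shading
    rw [exp_neg]
    field_simp
    ring
  rw [hfac, mul_assoc (v - x)]
  exact mul_lt_mul_of_pos_right h (by positivity)

theorem utility_exp_weight_strictMonoOn {c v S S' w : ℝ} (hc : 0 < c) (hS' : 0 < S')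
    (hS : S' ≤ S) (hw : w + shading c S' w ≤ v) :
    StrictMonoOn (utility (fun x => exp (c * x) - 1) v S) (Icc 0 w) := by
  refine utility_strictMonoOn (f' := fun x => c * exp (c * x)) (fun x _ => ?_)
    (fun x hx => ?_) fun x hx => exp_weight_mul_lt_of_shading_lt hc (hS'.trans_le hS) ?_
  · exact (((hasDerivAt_id x).const_mul c).exp.sub_const 1).congr_deriv
      (by rw [id, mul_one, mul_comm])
  · have : 1 ≤ exp (c * x) := one_le_exp (mul_nonneg hc.le hx.1)
    linarith
  · calc shading c S x ≤ shading c S' w := shading_le_shading hc hS' hS hx.1.le hx.2.le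
      _ < v - x := by linarith [hx.2]

theorem one_div_one_sub_div_add {a s : ℝ} (hs : s ≠ 0) (has : a + s ≠ 0) :
    1 / (1 - a / (a + s)) = 1 + a / s := by
  rw [one_sub_div has, add_sub_cancel_left, one_div_div, add_div, div_self hs, add_comm]

theorem best_response_lower_bound_general (n : ℕ) (hn : 2 ≤ n) (c : ℝ) (hc : 0 < c)
    (v : Fin n → ℝ)
    (f : ℝ → ℝ) (hf : ∀ x, f x = Real.exp (c * x) - 1)
    (w : Fin n → ℝ) (hwpos : ∀ i, 0 < w i)
    (hw : ∀ i, w i ≤ v i - (1 / c) * (1 - Real.exp (-(c * w i))) *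
        (1 / (1 - f (w i) / ∑ j, f (w j))))
    (b : Fin n → ℝ) (hb : ∀ i, w i ≤ b i) :
    ∀ i, ∀ β ∈ Set.Icc 0 (v i),
      (∀ x ∈ Set.Icc 0 (v i),
          (v i - x) * f x / (f x + ∑ j ∈ Finset.univ.erase i, f (b j)) ≤
            (v i - β) * f β / (f β + ∑ j ∈ Finset.univ.erase i, f (b j))) →
      w i ≤ β := by
  intro i β hβ hmax
  obtain rfl : f = fun x => exp (c * x) - 1 := funext hf
  have hfw : ∀ j, 0 < exp (c * w j) - 1 := fun j =>
    sub_pos.2 (one_lt_exp_iff.2 (mul_pos hc (hwpos j)))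
  have hothers : (univ.erase i).Nonempty := by
    rw [← card_pos, card_erase_of_mem (mem_univ i), card_univ, Fintype.card_fin]
    omega
  have hS' : 0 < ∑ j ∈ univ.erase i, (exp (c * w j) - 1) := sum_pos (fun j _ => hfw j) hothers
  have hS : ∑ j ∈ univ.erase i, (exp (c * w j) - 1) ≤
      ∑ j ∈ univ.erase i, (exp (c * b j) - 1) :=
    sum_le_sum fun j _ => by gcongr; exact hb j
  have hwi : w i + shading c (∑ j ∈ univ.erase i, (exp (c * w j) - 1)) (w i) ≤ v i := by
    have h := hw i
    rw [← add_sum_erase _ _ (mem_univ i),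
      one_div_one_sub_div_add hS'.ne' (by linarith [hfw i])] at h
    unfold shading
    linarith
  have hwv : w i ≤ v i := le_of_add_le_of_nonneg_left hwi (shading_nonneg hc hS'.le (hwpos i).le)
  have hmono := utility_exp_weight_strictMonoOn hc hS' hS hwi
  by_contra! hβw
  exact (hmax (w i) ⟨(hwpos i).le, hwv⟩).not_gt
    (hmono ⟨hβ.1, hβw.le⟩ ⟨(hwpos i).le, le_rfl⟩ hβw)

theorem best_response_lower_bound (n : ℕ) (hn : 2 ≤ n) (c : ℝ) (hc : 0 < c)
    (v : Fin n → ℝ) (hvpos : ∀ i, 0 < v i)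
    (hvsorted : ∀ i j : Fin n, i ≤ j → v j ≤ v i)
    (f : ℝ → ℝ) (hf : ∀ x, f x = Real.exp (c * x) - 1)
    (w : Fin n → ℝ) (hwpos : ∀ i, 0 < w i)
    (hw : ∀ i, w i ≤ v i - (1 / c) * (1 - Real.exp (-(c * w i))) *
        (1 / (1 - f (w i) / ∑ j, f (w j))))
    (b : Fin n → ℝ) (hb : ∀ i, w i ≤ b i) :
    ∀ i, ∀ β ∈ Set.Icc 0 (v i),
      (∀ x ∈ Set.Icc 0 (v i),
          (v i - x) * f x / (f x + ∑ j ∈ Finset.univ.erase i, f (b j)) ≤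
            (v i - β) * f β / (f β + ∑ j ∈ Finset.univ.erase i, f (b j))) →
      w i ≤ β :=
  best_response_lower_bound_general n hn c hc v f hf w hwpos hw b hb
end

section
/- Let v > 0, s > 0, c > 0, f(b) = e^{cb} - 1, and u(b) = (v - b)·f(b)/(f(b) + s). Then u has a unique maximizer b* on [0, v], and on (0, v) we have u'(b) > 0 for b < b* and u'(b) < 0 for b > b*. -/
theorem single_peaked_response (v s c : ℝ) (hv : 0 < v) (hs : 0 < s) (hc : 0 < c)
    (f : ℝ → ℝ) (hf : ∀ b, f b = Real.exp (c * b) - 1)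
    (u : ℝ → ℝ) (hu : ∀ b, u b = (v - b) * f b / (f b + s)) :
    ∃ bstar ∈ Set.Ioo 0 v,
      (∀ x ∈ Set.Icc 0 v, u x ≤ u bstar) ∧
      (∀ b ∈ Set.Ioo 0 v, b < bstar → 0 < deriv u b) ∧
      (∀ b ∈ Set.Ioo 0 v, bstar < b → deriv u b < 0) := by
  have huf : u = fun b => (v - b) * (Real.exp (c * b) - 1) / (Real.exp (c * b) - 1 + s) := by
    funext b; rw [hu, hf]
  set E : ℝ → ℝ := fun b => Real.exp (c * b) with hE
  have hEpos : ∀ b, 0 < E b := fun b => Real.exp_pos _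
  have hEne : ∀ b, E b ≠ 0 := fun b => (hEpos b).ne'
  have hE1 : ∀ b, 0 ≤ b → 1 ≤ E b := fun b hb => Real.one_le_exp (by positivity)
  set k : ℝ → ℝ := fun b => (v - b) * s * c - E b - (s - 2) - (1 - s) * (E b)⁻¹ with hk
  have hEderiv : ∀ b, HasDerivAt E (E b * c) b := by
    intro b
    simpa using (HasDerivAt.exp ((hasDerivAt_id b).const_mul c))
  have hkderiv : ∀ b, HasDerivAt k
      ((0 - 1) * s * c - E b * c - (1 - s) * (-(E b * c) / (E b) ^ 2)) b := by
    intro b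
    have h1 : HasDerivAt (fun x => (v - x) * s * c) ((0 - 1) * s * c) b :=
      (((hasDerivAt_const b v).sub (hasDerivAt_id b)).mul_const s).mul_const c
    have h2 : HasDerivAt (fun x => (1 - s) * (E x)⁻¹) ((1 - s) * (-(E b * c) / (E b) ^ 2)) b :=
      ((hEderiv b).inv (hEne b)).const_mul (1 - s)
    exact ((h1.sub (hEderiv b)).sub_const (s - 2)).sub h2
  have hkderiv_neg : ∀ b : ℝ, 0 ≤ b → deriv k b < 0 := by
    intro b hb
    rw [(hkderiv b).deriv]
    have hE1b := hE1 b hb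
    have hEb := hEpos b
    have key : (0 - 1) * s * c - E b * c - (1 - s) * (-(E b * c) / (E b) ^ 2)
        = c * (-s - E b + (1 - s) / E b) := by
      field_simp
      ring
    rw [key]
    have h1 : (1 - s) / E b ≤ 1 := by
      rw [div_le_one hEb]; nlinarith
    have : -s - E b + (1 - s) / E b < 0 := by nlinarith
    exact mul_neg_of_pos_of_neg hc this
  have hkcont : ContinuousOn k (Set.Icc 0 v) :=
    fun x _ => ((hkderiv x).differentiableAt.continuousAt).continuousWithinAt
  have hkanti : StrictAntiOn k (Set.Icc 0 v) := by
    apply strictAntiOn_of_deriv_neg (convex_Icc 0 v) hkcont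
    intro x hx
    rw [interior_Icc] at hx
    exact hkderiv_neg x hx.1.le
  have hk0 : k 0 = v * s * c := by
    simp only [hk, hE]
    norm_num
    ring
  have hkv : k v < 0 := by
    have h1 : 1 < E v := by
      simp only [hE]
      have : Real.exp 0 < Real.exp (c * v) := Real.exp_lt_exp.mpr (by positivity)
      simpa using this
    have hEv := hEpos v
    simp only [hk]
    have : (v - v) * s * c - E v - (s - 2) - (1 - s) * (E v)⁻¹
        = (-(E v - 1) * (E v - 1 + s)) / E v := by
      field_simp
      ring
    rw [this]
    apply div_neg_of_neg_of_pos _ hEv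
    nlinarith
  -- intermediate value
  have hk0pos : 0 < k 0 := by rw [hk0]; positivity
  have hivt : Set.Ioo (k v) (k 0) ⊆ k '' Set.Ioo 0 v :=
    intermediate_value_Ioo' hv.le hkcont
  obtain ⟨bstar, hbmem, hbzero⟩ := hivt ⟨hkv, hk0pos⟩
  -- denominator positivity
  have hD : ∀ b : ℝ, 0 ≤ b → 0 < E b - 1 + s := by
    intro b hb; have := hE1 b hb; linarith
  -- derivative of u
  have huderiv : ∀ b : ℝ, 0 ≤ b → HasDerivAt u ((E b * k b) / (E b - 1 + s) ^ 2) b := by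
    intro b hb
    have hN : HasDerivAt (fun x => (v - x) * (E x - 1))
        ((0 - 1) * (E b - 1) + (v - b) * (E b * c)) b :=
      ((hasDerivAt_const b v).sub (hasDerivAt_id b)).mul ((hEderiv b).sub_const 1)
    have hDd : HasDerivAt (fun x => E x - 1 + s) (E b * c) b :=
      ((hEderiv b).sub_const 1).add_const s
    have := hN.div hDd (hD b hb).ne'
    have hequ : u = fun x => (v - x) * (E x - 1) / (E x - 1 + s) := huf
    rw [hequ]
    refine this.congr_deriv ?_
    have hEb := hEne b
    have hDb := (hD b hb).ne'
    simp only [k]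
    field_simp
    ring
  have hderiv_eq : ∀ b : ℝ, 0 ≤ b → deriv u b = (E b * k b) / (E b - 1 + s) ^ 2 :=
    fun b hb => (huderiv b hb).deriv
  have hsign_pos : ∀ b ∈ Set.Ioo 0 v, b < bstar → 0 < deriv u b := by
    intro b hb hlt
    rw [hderiv_eq b hb.1.le]
    have hkb : 0 < k b := by
      have := hkanti (Set.Ioo_subset_Icc_self hb) (Set.Ioo_subset_Icc_self hbmem) hlt
      rw [hbzero] at this; linarith
    have := hD b hb.1.le
    positivity
  have hsign_neg : ∀ b ∈ Set.Ioo 0 v, bstar < b → deriv u b < 0 := by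
    intro b hb hlt
    rw [hderiv_eq b hb.1.le]
    have hkb : k b < 0 := by
      have := hkanti (Set.Ioo_subset_Icc_self hbmem) (Set.Ioo_subset_Icc_self hb) hlt
      rw [hbzero] at this; linarith
    apply div_neg_of_neg_of_pos
    · exact mul_neg_of_pos_of_neg (hEpos b) hkb
    · have := hD b hb.1.le; positivity
  have hucont : ContinuousOn u (Set.Icc 0 v) :=
    fun x hx => ((huderiv x hx.1).differentiableAt.continuousAt).continuousWithinAt
  -- monotone on [0, bstar]
  have hmono : StrictMonoOn u (Set.Icc 0 bstar) := by
    apply strictMonoOn_of_deriv_pos (convex_Icc 0 bstar)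
      (hucont.mono (Set.Icc_subset_Icc le_rfl hbmem.2.le))
    intro x hx
    rw [interior_Icc] at hx
    exact hsign_pos x ⟨hx.1, hx.2.trans hbmem.2⟩ hx.2
  have hanti : StrictAntiOn u (Set.Icc bstar v) := by
    apply strictAntiOn_of_deriv_neg (convex_Icc bstar v)
      (hucont.mono (Set.Icc_subset_Icc hbmem.1.le le_rfl))
    intro x hx
    rw [interior_Icc] at hx
    exact hsign_neg x ⟨hbmem.1.trans hx.1, hx.2⟩ hx.1
  refine ⟨bstar, hbmem, ?_, hsign_pos, hsign_neg⟩
  intro x hx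
  rcases le_or_gt x bstar with h | h
  · exact hmono.monotoneOn ⟨hx.1, h⟩ ⟨hbmem.1.le, le_rfl⟩ h
  · exact (hanti.antitoneOn ⟨le_rfl, hbmem.2.le⟩ ⟨h.le, hx.2⟩ h.le).trans_eq rfl
end
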